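/- arXiv:2206.00596 — 3 statements merged into one kernel-verified Lean document; each statement's English description precedes it below -/
import Mathlib

section
/- Let k ≥ 1 and let M be a 2k×2k matrix over the formal power series ring ℂ[[x]] (PowerSeries ℂ) with Mᵀ = −M and det M ≠ 0. Then there exist an invertible 2k×2k matrix A over ℂ[[x]] and a non-decreasing sequence of natural numbers a₁ ≤ a₂ ≤ … ≤ a_k such that Aᵀ·M·A is the 2k×2k matrix whose (2i−1, 2i) entry is x^{a_i} and whose (2i, 2i−1) entry is −x^{a_i} for each 1 ≤ i ≤ k, with all other entries equal to 0. -/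
open Matrix PowerSeries

namespace SkewNF

noncomputable section

local notation "R" => PowerSeries ℂ

variable {ι : Type*} [Fintype ι] [DecidableEq ι]

/-- Congruence relation over R. -/
def Cong (M N : Matrix ι ι R) : Prop :=
  ∃ A : (Matrix ι ι R)ˣ, (A : Matrix ι ι R)ᵀ * M * (A : Matrix ι ι R) = N

lemma Cong.refl (M : Matrix ι ι R) : Cong M M :=
  ⟨1, by simp⟩

lemma Cong.trans {M N P : Matrix ι ι R} (h1 : Cong M N) (h2 : Cong N P) : Cong M P := by
  obtain ⟨A, hA⟩ := h1
  obtain ⟨B, hB⟩ := h2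
  refine ⟨A * B, ?_⟩
  have : ((A * B : (Matrix ι ι R)ˣ) : Matrix ι ι R) = (A : Matrix ι ι R) * B := rfl
  rw [this, transpose_mul]
  have e : (B : Matrix ι ι R)ᵀ * (A : Matrix ι ι R)ᵀ * M * ((A : Matrix ι ι R) * B)
      = (B : Matrix ι ι R)ᵀ * ((A : Matrix ι ι R)ᵀ * M * A) * B := by noncomm_ring
  rw [e, hA, hB]

lemma Cong.skew {M N : Matrix ι ι R} (h : Cong M N) (hM : Mᵀ = -M) : Nᵀ = -N := by
  obtain ⟨A, hA⟩ := h
  subst hA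
  rw [transpose_mul, transpose_mul, transpose_transpose, hM]
  noncomm_ring

lemma Cong.det_ne_zero {M N : Matrix ι ι R} (h : Cong M N) (hM : M.det ≠ 0) : N.det ≠ 0 := by
  obtain ⟨A, hA⟩ := h
  subst hA
  rw [det_mul, det_mul, det_transpose]
  have hA0 : (A : Matrix ι ι R).det ≠ 0 := by
    intro h0
    have := A.isUnit.map (Matrix.detMonoidHom)
    rw [Matrix.coe_detMonoidHom] at this
    rw [h0] at this
    exact not_isUnit_zero this
  exact mul_ne_zero (mul_ne_zero hA0 hM) hA0

lemma dvd_mul_matrix (r : R) (P M Q : Matrix ι ι R)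
    (h : ∀ i j, r ∣ M i j) (i j : ι) : r ∣ (P * M * Q) i j := by
  rw [Matrix.mul_apply]
  refine Finset.dvd_sum fun l _ => ?_
  rw [Matrix.mul_apply]
  exact Dvd.dvd.mul_right (Finset.dvd_sum fun l' _ => ((h l' l).mul_left _)) _

lemma Cong.dvd {M N : Matrix ι ι R} (h : Cong M N) {r : R}
    (hM : ∀ i j, r ∣ M i j) : ∀ i j, r ∣ N i j := by
  obtain ⟨A, hA⟩ := h
  subst hA
  exact dvd_mul_matrix r _ _ _ hM

lemma skew_diag_zero {M : Matrix ι ι R} (hM : Mᵀ = -M) (i : ι) : M i i = 0 := by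
  have h : M i i = -M i i := by
    conv_lhs => rw [show M i i = Mᵀ i i from rfl, hM]
    simp
  have h2 : (2 : R) * M i i = 0 := by
    rw [two_mul]
    nth_rewrite 1 [h]
    ring
  rcases mul_eq_zero.mp h2 with h3 | h3
  · have := congrArg (constantCoeff : PowerSeries ℂ →+* ℂ) h3
    rw [map_ofNat, map_zero] at this
    norm_num at this
  · exact h3

lemma xpow_le {b c : ℕ} (h : (X : R) ^ b ∣ (X : R) ^ c) : b ≤ c := by
  rwa [pow_dvd_pow_iff X_ne_zero (by simp [isUnit_iff_constantCoeff])] at h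

/-- Congruence by a permutation. -/
lemma cong_submatrix (σ : ι ≃ ι) (M : Matrix ι ι R) : Cong M (M.submatrix σ σ) := by
  classical
  refine ⟨⟨(1 : Matrix ι ι R).submatrix id ⇑σ, (1 : Matrix ι ι R).submatrix ⇑σ id, ?_, ?_⟩, ?_⟩
  · calc (1 : Matrix ι ι R).submatrix id ⇑σ * (1 : Matrix ι ι R).submatrix ⇑σ id
        = ((1 : Matrix ι ι R) * 1).submatrix (id : ι → ι) (id : ι → ι) :=
          submatrix_mul_equiv _ _ _ σ _
      _ = 1 := by simp
  · calc (1 : Matrix ι ι R).submatrix ⇑σ id * (1 : Matrix ι ι R).submatrix id ⇑σ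
        = ((1 : Matrix ι ι R) * 1).submatrix ⇑σ ⇑σ := by
          have := submatrix_mul_equiv (1 : Matrix ι ι R) (1 : Matrix ι ι R) ⇑σ (Equiv.refl ι) ⇑σ
          simpa using this
      _ = 1 := by rw [mul_one]; exact submatrix_one_equiv σ
  · show ((1 : Matrix ι ι R).submatrix id ⇑σ)ᵀ * M * (1 : Matrix ι ι R).submatrix id ⇑σ
        = M.submatrix σ σ
    rw [transpose_submatrix, transpose_one]
    have h1 : (1 : Matrix ι ι R).submatrix ⇑σ id * M = M.submatrix ⇑σ id := by
      have := submatrix_mul_equiv (1 : Matrix ι ι R) M ⇑σ (Equiv.refl ι) (id : ι → ι)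
      simpa using this
    have h2 : M.submatrix ⇑σ id * (1 : Matrix ι ι R).submatrix id ⇑σ = M.submatrix ⇑σ ⇑σ := by
      have := submatrix_mul_equiv M (1 : Matrix ι ι R) ⇑σ (Equiv.refl ι) ⇑σ
      simpa using this
    rw [h1, h2]

/-- The clearing + scaling step. -/
lemma cong_clear (M : Matrix ι ι R) (hskew : Mᵀ = -M) (r s : ι) (hrs : r ≠ s)
    (b : ℕ) (u : Rˣ) (hpivot : M r s = X ^ b * (u : R)) (hdvd : ∀ i j, (X : R) ^ b ∣ M i j) :
    ∃ N : Matrix ι ι R, Cong M N ∧ Nᵀ = -N ∧ (∀ i j, (X : R) ^ b ∣ N i j) ∧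
      N r s = X ^ b ∧ N s r = -X ^ b ∧ N r r = 0 ∧ N s s = 0 ∧
      (∀ j, j ≠ r → j ≠ s → N r j = 0 ∧ N s j = 0 ∧ N j r = 0 ∧ N j s = 0) := by
  classical
  -- the quotients
  have hg : ∀ i j, ∃ g : R, M i j = X ^ b * g := fun i j => hdvd i j
  choose g hg using hg
  set α : ι → R := fun j => if j = r ∨ j = s then 0 else g s j * ↑u⁻¹ with hα
  set β : ι → R := fun j => if j = r ∨ j = s then 0 else -(g r j * ↑u⁻¹) with hβ
  set E : Matrix ι ι R :=
    Matrix.of (fun i j => (if i = r then α j else 0) + (if i = s then β j else 0)) with hE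
  have hαr : α r = 0 := by simp [hα]
  have hαs : α s = 0 := by simp [hα]
  have hβr : β r = 0 := by simp [hβ]
  have hβs : β s = 0 := by simp [hβ]
  have hErs : ∀ l j, l ≠ r → l ≠ s → E l j = 0 := by
    intro l j h1 h2; simp [hE, h1, h2]
  have hE2 : E * E = 0 := by
    refine Matrix.ext fun i j => ?_
    rw [Matrix.mul_apply, Matrix.zero_apply]
    refine Finset.sum_eq_zero fun l _ => ?_
    by_cases hl1 : l = r
    · subst hl1
      have : E i l = 0 := by simp [hE, hαr, hβr]
      rw [this, zero_mul]
    · by_cases hl2 : l = s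
      · subst hl2
        have : E i l = 0 := by simp [hE, hαs, hβs]
        rw [this, zero_mul]
      · rw [hErs l j hl1 hl2, mul_zero]
  set A : Matrix ι ι R := 1 + E with hA
  have hA1 : (1 - E) * A = 1 := by
    have h : (1 - E) * A = 1 - E * E := by rw [hA]; noncomm_ring
    rw [h, hE2, sub_zero]
  have hA2 : A * (1 - E) = 1 := by
    have h : A * (1 - E) = 1 - E * E := by rw [hA]; noncomm_ring
    rw [h, hE2, sub_zero]
  set Au : (Matrix ι ι R)ˣ := ⟨A, 1 - E, hA2, hA1⟩ with hAu
  set Q : Matrix ι ι R := M * A with hQdef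
  have hME : ∀ i j, (M * E) i j = M i r * α j + M i s * β j := by
    intro i j
    rw [Matrix.mul_apply]
    simp only [hE, Matrix.of_apply, mul_add, mul_ite, mul_zero]
    rw [Finset.sum_add_distrib,
      Finset.sum_ite_eq' Finset.univ r (fun l => M i l * α j),
      Finset.sum_ite_eq' Finset.univ s (fun l => M i l * β j)]
    simp
  have hQ : ∀ i j, Q i j = M i j + (M i r * α j + M i s * β j) := by
    intro i j
    rw [hQdef, hA, mul_add, mul_one, Matrix.add_apply, hME]
  have hsr : M s r = -(X ^ b * (u : R)) := by
    have h := congrFun (congrFun hskew r) s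
    simp only [Matrix.transpose_apply, Matrix.neg_apply] at h
    rw [h, hpivot]
  have hQr : ∀ j, j ≠ r → j ≠ s → Q r j = 0 := by
    intro j h1 h2
    rw [hQ, skew_diag_zero hskew r, hpivot, hg r j]
    have hαj : α j = g s j * ↑u⁻¹ := by simp [hα, h1, h2]
    have hβj : β j = -(g r j * ↑u⁻¹) := by simp [hβ, h1, h2]
    rw [hαj, hβj]
    linear_combination (-((X : R) ^ b * g r j)) * u.mul_inv
  have hQs : ∀ j, j ≠ r → j ≠ s → Q s j = 0 := by
    intro j h1 h2
    rw [hQ, skew_diag_zero hskew s, hsr, hg s j]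
    have hαj : α j = g s j * ↑u⁻¹ := by simp [hα, h1, h2]
    have hβj : β j = -(g r j * ↑u⁻¹) := by simp [hβ, h1, h2]
    rw [hαj, hβj]
    linear_combination (-((X : R) ^ b * g s j)) * u.mul_inv
  have hQrs : Q r s = X ^ b * (u : R) := by
    rw [hQ, hαs, hβs, hpivot]; ring
  have hQrr : Q r r = 0 := by
    rw [hQ, hαr, hβr, skew_diag_zero hskew r]; ring
  have hQsr : Q s r = -(X ^ b * (u : R)) := by
    rw [hQ, hαr, hβr, hsr]; ring
  have hQss : Q s s = 0 := by
    rw [hQ, hαs, hβs, skew_diag_zero hskew s]; ring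
  set N : Matrix ι ι R := Aᵀ * M * A with hNdef
  have hNQ : N = Q + Eᵀ * Q := by
    rw [hNdef, hQdef, hA, mul_assoc]
    rw [show (1 + E : Matrix ι ι R)ᵀ = 1 + Eᵀ by rw [transpose_add, transpose_one]]
    noncomm_ring
  have hEQ : ∀ i j, (Eᵀ * Q) i j = α i * Q r j + β i * Q s j := by
    intro i j
    rw [Matrix.mul_apply]
    simp only [Matrix.transpose_apply, hE, Matrix.of_apply, add_mul, ite_mul, zero_mul]
    rw [Finset.sum_add_distrib,
      Finset.sum_ite_eq' Finset.univ r (fun l => α i * Q l j),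
      Finset.sum_ite_eq' Finset.univ s (fun l => β i * Q l j)]
    simp
  have hNap : ∀ i j, N i j = Q i j + (α i * Q r j + β i * Q s j) := by
    intro i j
    rw [hNQ, Matrix.add_apply, hEQ]
  have hNskew : Nᵀ = -N := by
    rw [hNdef, transpose_mul, transpose_mul, transpose_transpose, hskew]
    noncomm_ring
  have hNrs : N r s = X ^ b * (u : R) := by
    rw [hNap, hαr, hβr, hQrs]; ring
  have hNsr : N s r = -(X ^ b * (u : R)) := by
    rw [hNap, hαs, hβs, hQsr]; ring
  have hNrj : ∀ j, j ≠ r → j ≠ s → N r j = 0 := by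
    intro j h1 h2
    rw [hNap, hαr, hβr, hQr j h1 h2]; ring
  have hNsj : ∀ j, j ≠ r → j ≠ s → N s j = 0 := by
    intro j h1 h2
    rw [hNap, hαs, hβs, hQs j h1 h2]; ring
  have hNjr : ∀ j, j ≠ r → j ≠ s → N j r = 0 := by
    intro j h1 h2
    have h := congrFun (congrFun hNskew r) j
    simp only [Matrix.transpose_apply, Matrix.neg_apply] at h
    rw [h, hNrj j h1 h2, neg_zero]
  have hNjs : ∀ j, j ≠ r → j ≠ s → N j s = 0 := by
    intro j h1 h2
    have h := congrFun (congrFun hNskew s) j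
    simp only [Matrix.transpose_apply, Matrix.neg_apply] at h
    rw [h, hNsj j h1 h2, neg_zero]
  have hNrr : N r r = 0 := skew_diag_zero hNskew r
  have hNss : N s s = 0 := skew_diag_zero hNskew s
  have hNdvd : ∀ i j, (X : R) ^ b ∣ N i j := by
    intro i j
    exact dvd_mul_matrix _ _ _ _ hdvd i j
  -- now scale column s by u⁻¹
  set d : ι → R := fun i => if i = s then (↑u⁻¹ : R) else 1 with hd
  set d' : ι → R := fun i => if i = s then (↑u : R) else 1 with hd'
  have hdd' : Matrix.diagonal d * Matrix.diagonal d' = 1 := by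
    rw [Matrix.diagonal_mul_diagonal]
    have : (fun i => d i * d' i) = fun _ => (1 : R) := by
      funext i
      by_cases h : i = s <;> simp [hd, hd', h]
    rw [this, Matrix.diagonal_one]
  have hd'd : Matrix.diagonal d' * Matrix.diagonal d = 1 := by
    rw [Matrix.diagonal_mul_diagonal]
    have : (fun i => d' i * d i) = fun _ => (1 : R) := by
      funext i
      by_cases h : i = s <;> simp [hd, hd', h]
    rw [this, Matrix.diagonal_one]
  set Du : (Matrix ι ι R)ˣ := ⟨Matrix.diagonal d, Matrix.diagonal d', hdd', hd'd⟩ with hDu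
  set N' : Matrix ι ι R := Matrix.diagonal d * N * Matrix.diagonal d with hN'def
  have hN'ap : ∀ i j, N' i j = d i * N i j * d j := by
    intro i j
    rw [hN'def, Matrix.mul_diagonal, Matrix.diagonal_mul]
  have hds : d s = (↑u⁻¹ : R) := by simp [hd]
  have hdr : d r = 1 := by simp [hd, hrs]
  refine ⟨N', ⟨Au * Du, ?_⟩, ?_, ?_, ?_, ?_, ?_, ?_, ?_⟩
  · have hc : ((Au * Du : (Matrix ι ι R)ˣ) : Matrix ι ι R) = A * Matrix.diagonal d := rfl
    rw [hc, transpose_mul, Matrix.diagonal_transpose, hN'def, hNdef]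
    noncomm_ring
  · rw [hN'def, transpose_mul, transpose_mul, Matrix.diagonal_transpose, hNskew]
    noncomm_ring
  · intro i j
    rw [hN'def]
    exact dvd_mul_matrix _ _ _ _ hNdvd i j
  · rw [hN'ap, hdr, hds, hNrs]
    linear_combination (X : R) ^ b * u.mul_inv
  · rw [hN'ap, hdr, hds, hNsr]
    linear_combination (-(X : R) ^ b) * u.mul_inv
  · rw [hN'ap, hNrr]; ring
  · rw [hN'ap, hNss]; ring
  · intro j h1 h2
    refine ⟨?_, ?_, ?_, ?_⟩
    · rw [hN'ap, hNrj j h1 h2]; ring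
    · rw [hN'ap, hNsj j h1 h2]; ring
    · rw [hN'ap, hNjr j h1 h2]; ring
    · rw [hN'ap, hNjs j h1 h2]; ring


def esum (m : ℕ) : (Fin 2 ⊕ Fin 2 × Fin m) ≃ Fin 2 × Fin (m + 1) where
  toFun x := Sum.elim (fun c => (c, 0)) (fun ci => (ci.1, ci.2.succ)) x
  invFun x := Fin.cases (Sum.inl x.1) (fun i' => Sum.inr (x.1, i')) x.2
  left_inv := by rintro (c | ⟨c, i⟩) <;> simp
  right_inv := by
    rintro ⟨c, i⟩
    induction i using Fin.cases <;> simp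

lemma esum_symm_zero {m : ℕ} (c : Fin 2) : (esum m).symm (c, 0) = Sum.inl c := by
  simp [esum]

lemma esum_symm_succ {m : ℕ} (c : Fin 2) (i : Fin m) :
    (esum m).symm (c, i.succ) = Sum.inr (c, i) := by
  simp [esum]

lemma monotone_cons {m : ℕ} (b : ℕ) (a1 : Fin m → ℕ) (h1 : Monotone a1)
    (hb : ∀ i, b ≤ a1 i) : Monotone (Fin.cons b a1) := by
  intro i j hij
  induction i using Fin.cases with
  | zero =>
    induction j using Fin.cases with
    | zero => exact le_refl _
    | succ j' => simpa using hb j'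
  | succ i' =>
    induction j using Fin.cases with
    | zero => exact absurd hij (by simp [Fin.le_def])
    | succ j' =>
      simp only [Fin.cons_succ]
      exact h1 (by simpa using hij)


lemma fromBlocks_submatrix_blockDiagonal {m : ℕ} (B0 : Matrix (Fin 2) (Fin 2) R)
    (g : Fin m → Matrix (Fin 2) (Fin 2) R) :
    (fromBlocks B0 0 0 (blockDiagonal g)).submatrix ⇑(esum m).symm ⇑(esum m).symm =
      blockDiagonal (Fin.cons B0 g) := by
  refine Matrix.ext fun x y => ?_
  rcases x with ⟨c, i⟩
  rcases y with ⟨d, j⟩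
  rw [Matrix.submatrix_apply]
  induction i using Fin.cases with
  | zero =>
    induction j using Fin.cases with
    | zero =>
      rw [esum_symm_zero, esum_symm_zero, fromBlocks_apply₁₁, blockDiagonal_apply]
      simp
    | succ j' =>
      rw [esum_symm_zero, esum_symm_succ, fromBlocks_apply₁₂, blockDiagonal_apply]
      simp [(Fin.succ_ne_zero j').symm]
  | succ i' =>
    induction j using Fin.cases with
    | zero =>
      rw [esum_symm_succ, esum_symm_zero, fromBlocks_apply₂₁, blockDiagonal_apply]
      simp [Fin.succ_ne_zero i']
    | succ j' =>
      rw [esum_symm_succ, esum_symm_succ, fromBlocks_apply₂₂, blockDiagonal_apply,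
        blockDiagonal_apply]
      by_cases h : i' = j'
      · subst h
        simp
      · have h2 : Fin.succ i' ≠ Fin.succ j' := fun hh => h (Fin.succ_inj.mp hh)
        simp [h, h2]

lemma main (k : ℕ) (M : Matrix (Fin 2 × Fin k) (Fin 2 × Fin k) R)
    (hskew : Mᵀ = -M) (hdet : M.det ≠ 0) :
    ∃ (A : (Matrix (Fin 2 × Fin k) (Fin 2 × Fin k) R)ˣ) (a : Fin k → ℕ),
      Monotone a ∧
      (A : Matrix (Fin 2 × Fin k) (Fin 2 × Fin k) R)ᵀ * M *
          (A : Matrix (Fin 2 × Fin k) (Fin 2 × Fin k) R) =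
        Matrix.blockDiagonal (fun i => ((X : R) ^ (a i)) • !![(0 : R), 1; -1, 0]) := by
  classical
  induction k with
  | zero =>
    refine ⟨1, fun i => i.elim0, fun i => i.elim0, ?_⟩
    refine Matrix.ext fun i j => ?_
    exact i.2.elim0
  | succ m ih =>
    -- M ≠ 0
    have hne : M ≠ 0 := by
      intro h0
      exact hdet (by rw [h0, det_zero])
    obtain ⟨p₀, q₀, hpq₀⟩ : ∃ p q, M p q ≠ 0 := by
      by_contra h
      push_neg at h
      exact hne (Matrix.ext fun i j => h i j)
    obtain ⟨d, hd⟩ : ∃ d, coeff d (M p₀ q₀) ≠ 0 := by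
      by_contra h
      push_neg at h
      exact hpq₀ (PowerSeries.ext fun n => by rw [h n, map_zero])
    set P : ℕ → Prop := fun n => ∀ i j, (X : R) ^ n ∣ M i j with hPdef
    have hP0 : P 0 := fun i j => by simp
    have hPle : ∀ n, P n → n ≤ d := by
      intro n hn
      by_contra hlt
      push_neg at hlt
      exact hd (X_pow_dvd_iff.mp (hn p₀ q₀) d hlt)
    set b : ℕ := Nat.findGreatest P d with hbdef
    have hPb : P b := Nat.findGreatest_spec (Nat.zero_le d) hP0
    have hnot : ¬ P (b + 1) := by
      intro hP1
      exact Nat.findGreatest_is_greatest (Nat.lt_succ_self b) (hPle _ hP1) hP1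
    obtain ⟨p, q, hpq⟩ : ∃ i j, ¬ (X : R) ^ (b + 1) ∣ M i j := by
      by_contra h
      push_neg at h
      exact hnot h
    have hcb : coeff b (M p q) ≠ 0 := by
      intro h0
      apply hpq
      rw [X_pow_dvd_iff]
      intro m' hm'
      rcases Nat.lt_succ_iff_lt_or_eq.mp hm' with h | h
      · exact X_pow_dvd_iff.mp (hPb p q) m' h
      · rw [h]; exact h0
    obtain ⟨g0, hg0⟩ := hPb p q
    have hg0u : IsUnit g0 := by
      rw [isUnit_iff_constantCoeff]
      have hc : constantCoeff g0 = coeff b (M p q) := by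
        have h2 := coeff_X_pow_mul g0 b 0
        rw [zero_add] at h2
        rw [hg0, h2, coeff_zero_eq_constantCoeff]
      rw [hc]
      exact Ne.isUnit hcb
    set u : Rˣ := hg0u.unit with hudef
    have hu : M p q = X ^ b * (u : R) := by rw [IsUnit.unit_spec, ← hg0]
    have hppq : p ≠ q := by
      intro h
      subst h
      rw [skew_diag_zero hskew p, map_zero] at hcb
      exact hcb rfl
    set r : Fin 2 × Fin (m + 1) := ((0 : Fin 2), (0 : Fin (m + 1))) with hrdef
    set s : Fin 2 × Fin (m + 1) := ((1 : Fin 2), (0 : Fin (m + 1))) with hsdef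
    have hrs : r ≠ s := by simp [hrdef, hsdef, Prod.ext_iff]
    -- permutation sending r ↦ p, s ↦ q
    set σ₁ := Equiv.swap r p with hσ₁
    set q' := σ₁ q with hq'
    have hq'r : q' ≠ r := by
      intro h
      apply hppq
      have : σ₁ p = r := Equiv.swap_apply_right r p
      exact (σ₁.injective (h.trans this.symm)).symm ▸ rfl
    set σ₂ := Equiv.swap s q' with hσ₂
    set σ := σ₂.trans σ₁ with hσ
    have hσr : σ r = p := by
      have h2 : σ₂ r = r := Equiv.swap_apply_of_ne_of_ne hrs (Ne.symm hq'r)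
      rw [hσ, Equiv.trans_apply, h2, hσ₁, Equiv.swap_apply_left]
    have hσs : σ s = q := by
      have h2 : σ₂ s = q' := Equiv.swap_apply_left s q'
      rw [hσ, Equiv.trans_apply, h2, hq', hσ₁, Equiv.swap_apply_self]
    set M2 := M.submatrix σ σ with hM2
    have hc1 : Cong M M2 := cong_submatrix σ M
    have hskew2 : M2ᵀ = -M2 := hc1.skew hskew
    have hdvd2 : ∀ i j, (X : R) ^ b ∣ M2 i j := fun i j => hPb _ _
    have hpivot2 : M2 r s = X ^ b * (u : R) := by
      rw [hM2, Matrix.submatrix_apply, hσr, hσs, hu]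
    obtain ⟨N, hc2, hNskew, hNdvd, hNrs, hNsr, hNrr, hNss, hNcross⟩ :=
      cong_clear M2 hskew2 r s hrs b u hpivot2 hdvd2
    have hcMN : Cong M N := hc1.trans hc2
    have hNdet : N.det ≠ 0 := hcMN.det_ne_zero hdet
    -- cross zero entries
    have hcross : ∀ (c : Fin 2) (j : Fin 2 × Fin (m + 1)), j.2 ≠ 0 →
        N (c, 0) j = 0 ∧ N j (c, 0) = 0 := by
      intro c j hj
      have hjr : j ≠ r := by intro h; rw [h] at hj; exact hj rfl
      have hjs : j ≠ s := by intro h; rw [h] at hj; exact hj rfl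
      obtain ⟨h1, h2, h3, h4⟩ := hNcross j hjr hjs
      fin_cases c
      · exact ⟨h1, h3⟩
      · exact ⟨h2, h4⟩
    set M1 : Matrix (Fin 2 × Fin m) (Fin 2 × Fin m) R :=
      Matrix.of (fun i j => N (i.1, i.2.succ) (j.1, j.2.succ)) with hM1
    have hesum_inl : ∀ c : Fin 2, esum m (Sum.inl c) = (c, 0) := fun c => rfl
    have hesum_inr : ∀ ci : Fin 2 × Fin m, esum m (Sum.inr ci) = (ci.1, ci.2.succ) :=
      fun ci => rfl
    have hblocks : N.submatrix ⇑(esum m) ⇑(esum m) =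
        fromBlocks ((X : R) ^ b • !![(0 : R), 1; -1, 0]) 0 0 M1 := by
      refine Matrix.ext fun x y => ?_
      rcases x with (c | ⟨c, i⟩) <;> rcases y with (d | ⟨d, j⟩) <;>
        rw [Matrix.submatrix_apply]
      · rw [hesum_inl, hesum_inl, fromBlocks_apply₁₁]
        fin_cases c <;> fin_cases d
        · simpa [Matrix.smul_apply] using hNrr
        · simpa [Matrix.smul_apply] using hNrs
        · simpa [Matrix.smul_apply] using hNsr
        · simpa [Matrix.smul_apply] using hNss
      · rw [hesum_inl, hesum_inr, fromBlocks_apply₁₂, Matrix.zero_apply]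
        exact (hcross c _ (Fin.succ_ne_zero j)).1
      · rw [hesum_inr, hesum_inl, fromBlocks_apply₂₁, Matrix.zero_apply]
        exact (hcross d _ (Fin.succ_ne_zero i)).2
      · rw [hesum_inr, hesum_inr, fromBlocks_apply₂₂]
        rfl
    have hM1det : M1.det ≠ 0 := by
      have h1 : N.det = ((X : R) ^ b • !![(0 : R), 1; -1, 0]).det * M1.det := by
        rw [← det_submatrix_equiv_self (esum m) N, hblocks, det_fromBlocks_zero₂₁]
      intro h0
      rw [h0, mul_zero] at h1
      exact hNdet h1
    have hM1skew : M1ᵀ = -M1 := by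
      refine Matrix.ext fun i j => ?_
      have h := congrFun (congrFun hNskew (i.1, i.2.succ)) (j.1, j.2.succ)
      simp only [Matrix.transpose_apply, Matrix.neg_apply] at h ⊢
      exact h
    obtain ⟨A1, a1, hmono1, hA1⟩ := ih M1 hM1skew hM1det
    have hble : ∀ i, b ≤ a1 i := by
      intro i
      have hdvdM1 : ∀ i j, (X : R) ^ b ∣ M1 i j := fun i j => hNdvd _ _
      have h := dvd_mul_matrix ((X : R) ^ b) (A1 : Matrix (Fin 2 × Fin m) (Fin 2 × Fin m) R)ᵀ
        M1 (A1 : Matrix (Fin 2 × Fin m) (Fin 2 × Fin m) R) hdvdM1 ((0 : Fin 2), i) ((1 : Fin 2), i)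
      rw [hA1] at h
      simp only [blockDiagonal_apply, if_pos rfl, Matrix.smul_apply] at h
      apply xpow_le
      simpa using h
    -- assemble the final congruence
    set B : Matrix (Fin 2 ⊕ Fin 2 × Fin m) (Fin 2 ⊕ Fin 2 × Fin m) R :=
      fromBlocks 1 0 0 (A1 : Matrix (Fin 2 × Fin m) (Fin 2 × Fin m) R) with hB
    set Binv : Matrix (Fin 2 ⊕ Fin 2 × Fin m) (Fin 2 ⊕ Fin 2 × Fin m) R :=
      fromBlocks 1 0 0 ((A1⁻¹ : (Matrix (Fin 2 × Fin m) (Fin 2 × Fin m) R)ˣ) :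
        Matrix (Fin 2 × Fin m) (Fin 2 × Fin m) R) with hBinvdef
    have hBB : B * Binv = 1 := by
      rw [hB, hBinvdef, fromBlocks_multiply]
      have h : (A1 : Matrix (Fin 2 × Fin m) (Fin 2 × Fin m) R) *
          ((A1⁻¹ : (Matrix (Fin 2 × Fin m) (Fin 2 × Fin m) R)ˣ) :
            Matrix (Fin 2 × Fin m) (Fin 2 × Fin m) R) = 1 := A1.mul_inv
      simp [h, fromBlocks_one]
    have hBB' : Binv * B = 1 := by
      rw [hB, hBinvdef, fromBlocks_multiply]
      have h : ((A1⁻¹ : (Matrix (Fin 2 × Fin m) (Fin 2 × Fin m) R)ˣ) :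
            Matrix (Fin 2 × Fin m) (Fin 2 × Fin m) R) *
          (A1 : Matrix (Fin 2 × Fin m) (Fin 2 × Fin m) R) = 1 := A1.inv_mul
      simp [h, fromBlocks_one]
    set es := (esum m).symm with hes
    set U : Matrix (Fin 2 × Fin (m + 1)) (Fin 2 × Fin (m + 1)) R :=
      B.submatrix ⇑es ⇑es with hU
    set Uinv : Matrix (Fin 2 × Fin (m + 1)) (Fin 2 × Fin (m + 1)) R :=
      Binv.submatrix ⇑es ⇑es with hUinvdef
    have hUU : U * Uinv = 1 := by
      rw [hU, hUinvdef, submatrix_mul_equiv B Binv ⇑es es ⇑es, hBB, submatrix_one_equiv]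
    have hUU' : Uinv * U = 1 := by
      rw [hU, hUinvdef, submatrix_mul_equiv Binv B ⇑es es ⇑es, hBB', submatrix_one_equiv]
    set Au : (Matrix (Fin 2 × Fin (m + 1)) (Fin 2 × Fin (m + 1)) R)ˣ :=
      ⟨U, Uinv, hUU, hUU'⟩ with hAudef
    have key : Uᵀ * N * U =
        blockDiagonal (fun i => (X : R) ^ (Fin.cons b a1 : Fin (m + 1) → ℕ) i • !![(0 : R), 1; -1, 0]) := by
      have hNre : N = (N.submatrix ⇑(esum m) ⇑(esum m)).submatrix ⇑es ⇑es := by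
        rw [hes, submatrix_submatrix, Equiv.self_comp_symm, submatrix_id_id]
      have hUt : Uᵀ =
          (fromBlocks 1 0 0 ((A1 : Matrix (Fin 2 × Fin m) (Fin 2 × Fin m) R))ᵀ).submatrix
            ⇑es ⇑es := by
        rw [hU, transpose_submatrix, hB, fromBlocks_transpose, transpose_one, transpose_zero,
          transpose_zero]
      have step1 : Uᵀ * N * U =
          ((fromBlocks 1 0 0 ((A1 : Matrix (Fin 2 × Fin m) (Fin 2 × Fin m) R))ᵀ) *
            (N.submatrix ⇑(esum m) ⇑(esum m)) * B).submatrix ⇑es ⇑es := by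
        conv_lhs => rw [hUt, hNre, hU]
        rw [submatrix_mul_equiv _ _ ⇑es es ⇑es, submatrix_mul_equiv _ _ ⇑es es ⇑es]
      have inner : (fromBlocks 1 0 0 ((A1 : Matrix (Fin 2 × Fin m) (Fin 2 × Fin m) R))ᵀ) *
          (N.submatrix ⇑(esum m) ⇑(esum m)) * B
          = fromBlocks ((X : R) ^ b • !![(0 : R), 1; -1, 0]) 0 0
              (blockDiagonal fun i => (X : R) ^ a1 i • !![(0 : R), 1; -1, 0]) := by
        rw [hblocks, hB, fromBlocks_multiply, fromBlocks_multiply]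
        simp only [Matrix.one_mul, Matrix.mul_one, Matrix.zero_mul, Matrix.mul_zero,
          add_zero, zero_add]
        rw [hA1]
      have hfun : (Fin.cons ((X : R) ^ b • !![(0 : R), 1; -1, 0])
            (fun i => (X : R) ^ a1 i • !![(0 : R), 1; -1, 0]) :
            Fin (m + 1) → Matrix (Fin 2) (Fin 2) R) =
          fun i => (X : R) ^ (Fin.cons b a1 : Fin (m + 1) → ℕ) i • !![(0 : R), 1; -1, 0] := by
        funext i
        induction i using Fin.cases <;> simp
      rw [step1, inner, hes, fromBlocks_submatrix_blockDiagonal, hfun]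
    have hfinal : Cong M (blockDiagonal fun i => (X : R) ^ (Fin.cons b a1 : Fin (m + 1) → ℕ) i • !![(0 : R), 1; -1, 0]) :=
      hcMN.trans ⟨Au, key⟩
    obtain ⟨A, hA⟩ := hfinal
    exact ⟨A, Fin.cons b a1, monotone_cons b a1 hmono1 hble, hA⟩


end

end SkewNF

open Matrix

/-- Proposition 5.1 (Ps1): every skew-symmetric 2k×2k matrix family in one variable with
nonzero determinant (over ℂ[[x]]) is congruent over ℂ[[x]] to a block-diagonal matrix
with 2×2 blocks x^{a_i}·J₂, J₂ = [[0,1],[−1,0]], for a non-decreasing sequence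
a₁ ≤ a₂ ≤ … ≤ a_k of natural numbers.  Here 2k×2k matrices are indexed by
`Fin 2 × Fin k`, the pair (b,i) standing for the row 2i+1+b, so that the normal form is
`blockDiagonal (fun i => x^{a i} • J₂)`. -/
theorem one_parameter_skew_normal_form (k : ℕ) (hk : 1 ≤ k)
    (M : Matrix (Fin 2 × Fin k) (Fin 2 × Fin k) (PowerSeries ℂ))
    (hskew : Mᵀ = -M) (hdet : M.det ≠ 0) :
    ∃ (A : (Matrix (Fin 2 × Fin k) (Fin 2 × Fin k) (PowerSeries ℂ))ˣ) (a : Fin k → ℕ),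
      Monotone a ∧
      (A : Matrix (Fin 2 × Fin k) (Fin 2 × Fin k) (PowerSeries ℂ))ᵀ * M *
          (A : Matrix (Fin 2 × Fin k) (Fin 2 × Fin k) (PowerSeries ℂ)) =
        Matrix.blockDiagonal
          (fun i => ((PowerSeries.X : PowerSeries ℂ) ^ (a i)) • !![(0 : PowerSeries ℂ), 1; -1, 0]) := by
  obtain ⟨A, a, hmono, hA⟩ := SkewNF.main k M hskew hdet
  exact ⟨A, a, hmono, hA⟩
end

section
/- Let k ≥ 1, let R = ℂ[[x]] (PowerSeries ℂ), let a₁ ≤ a₂ ≤ … ≤ a_k be positive integers, and let M be the 2k×2k matrix over R with (2i−1, 2i) entry x^{a_i}, (2i, 2i−1) entry −x^{a_i} (1 ≤ i ≤ k), and all other entries 0. Let S be the R-submodule of Matrix (Fin 2k) (Fin 2k) R consisting of skew-symmetric matrices (Nᵀ = −N), and let T ⊆ S be the R-submodule generated by the entrywise derivative dM/dx together with the matrices E_{jℓ}·M + M·E_{ℓj} for all 1 ≤ j, ℓ ≤ 2k, where E_{jℓ} is the elementary matrix with (j,ℓ) entry 1 and all other entries 0. Then dim_ℂ (S / T) = (Σ_{i=1}^{k}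 (4(k−i)+1)·a_i) − 1. -/
open Matrix PowerSeries

namespace TjAux
noncomputable section
variable {k : ℕ} (a : Fin k → ℕ)

def pos (p : Fin 2 × Fin k) : ℕ := 2 * p.2.val + p.1.val

lemma pos_inj : Function.Injective (pos (k := k)) := by
  rintro ⟨s, i⟩ ⟨t, m⟩ h
  simp only [pos] at h
  have hs := s.isLt; have ht := t.isLt
  have : s.val = t.val ∧ i.val = m.val := by omega
  ext <;> simp [this.1, this.2]

lemma pos_lt_le {p q : Fin 2 × Fin k} (h : pos p < pos q) : p.2 ≤ q.2 := by
  obtain ⟨s, i⟩ := p; obtain ⟨t, m⟩ := q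
  simp only [pos] at h
  have hs := s.isLt; have ht := t.isLt
  show i ≤ m
  exact Fin.le_def.2 (by omega)

def dd (p : (Fin 2 × Fin k) × (Fin 2 × Fin k)) : ℕ :=
  if pos p.1 < pos p.2 then a (p.1.2 ⊓ p.2.2) else 0

abbrev Wsp := (p : (Fin 2 × Fin k) × (Fin 2 × Fin k)) → Fin (dd a p) → ℂ

def phi : Matrix (Fin 2 × Fin k) (Fin 2 × Fin k) (PowerSeries ℂ) →ₗ[ℂ] Wsp a where
  toFun N := fun p j => coeff j (N p.1 p.2)
  map_add' N₁ N₂ := by funext p j; simp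
  map_smul' z N := by funext p j; simp

lemma phi_apply (N) (p) (j) : phi a N p j = coeff j (N p.1 p.2) := rfl

/-- Preimage construction: a skew matrix with prescribed truncations. -/
def preim (w : Wsp a) : Matrix (Fin 2 × Fin k) (Fin 2 × Fin k) (PowerSeries ℂ) :=
  fun p q =>
    if pos p < pos q then PowerSeries.mk (fun n => if h : n < dd a (p, q) then w (p, q) ⟨n, h⟩ else 0)
    else if pos q < pos p then -(PowerSeries.mk (fun n => if h : n < dd a (q, p) then w (q, p) ⟨n, h⟩ else 0))
    else 0

lemma preim_skew (w : Wsp a) : (preim a w)ᵀ = -(preim a w) := by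
  apply Matrix.ext
  intro p q
  rw [transpose_apply, neg_apply]
  simp only [transpose_apply, neg_apply, preim]
  rcases lt_trichotomy (pos p) (pos q) with h | h | h
  · rw [if_neg (by omega), if_pos h, if_pos h]
  · rw [if_neg (by omega), if_neg (by omega), if_neg (by omega), if_neg (by omega), neg_zero]
  · rw [if_pos h, if_neg (by omega), if_pos h, neg_neg]

lemma phi_preim (w : Wsp a) : phi a (preim a w) = w := by
  funext p j
  have hlt : pos p.1 < pos p.2 := by
    by_contra h
    have hj := j.isLt
    simp only [dd, if_neg h] at hj
    omega
  simp only [phi_apply, preim, if_pos hlt, coeff_mk, j.isLt, dif_pos]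


def swap2 (s : Fin 2) : Fin 2 := ⟨1 - s.val, by omega⟩

lemma swap2_swap2 (s : Fin 2) : swap2 (swap2 s) = s := by fin_cases s <;> rfl

lemma swap2_inj : Function.Injective swap2 := by decide

def sgn (s : Fin 2) : PowerSeries ℂ := if s.val = 0 then 1 else -1

lemma sgn_swap2 (s : Fin 2) : sgn (swap2 s) = -(sgn s) := by
  fin_cases s <;> simp [sgn, swap2]

lemma sgn_mul_sgn (s : Fin 2) : sgn s * sgn s = 1 := by
  fin_cases s <;> simp [sgn]

def Mnf : Matrix (Fin 2 × Fin k) (Fin 2 × Fin k) (PowerSeries ℂ) :=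
  Matrix.blockDiagonal
    (fun i => ((PowerSeries.X : PowerSeries ℂ) ^ (a i)) • !![(0 : PowerSeries ℂ), 1; -1, 0])

lemma Mnf_apply (p q : Fin 2 × Fin k) :
    Mnf a p q = if q = (swap2 p.1, p.2) then sgn p.1 * X ^ (a p.2) else 0 := by
  obtain ⟨s, i⟩ := p; obtain ⟨t, m⟩ := q
  rw [Mnf, blockDiagonal_apply]
  fin_cases s <;> fin_cases t <;>
    by_cases h : i = m <;>
      simp [h, swap2, sgn, Prod.ext_iff, mul_comm, eq_comm]

lemma der_X_pow (n : ℕ) :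
    (PowerSeries.derivative ℂ) ((X : PowerSeries ℂ) ^ n) = (n : PowerSeries ℂ) * X ^ (n - 1) := by
  rw [Derivation.leibniz_pow]
  simp [nsmul_eq_mul, smul_eq_mul, mul_comm]

lemma Dm_apply (p q : Fin 2 × Fin k) :
    (Mnf a).map (PowerSeries.derivative ℂ) p q =
      if q = (swap2 p.1, p.2) then sgn p.1 * ((a p.2 : PowerSeries ℂ) * X ^ (a p.2 - 1)) else 0 := by
  rw [Matrix.map_apply, Mnf_apply]
  split
  · rw [sgn]
    split <;> simp [der_X_pow]
  · exact map_zero _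

lemma gen_eq (p q : Fin 2 × Fin k) :
    single q (swap2 p.1, p.2) 1 * Mnf a + Mnf a * single (swap2 p.1, p.2) q 1
      = sgn p.1 • (((X : PowerSeries ℂ) ^ (a p.2)) •
          (single p q 1 - single q p 1)) := by
  apply Matrix.ext
  intro p' q'
  have hA : (single q (swap2 p.1, p.2) 1 * Mnf a : Matrix _ _ _) p' q'
      = if q = p' then Mnf a (swap2 p.1, p.2) q' else 0 := by
    by_cases h : q = p'
    · subst h; simp
    · rw [Matrix.single_mul_apply_of_ne _ _ _ _ _ (Ne.symm h), if_neg h]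
  have hB : (Mnf a * single (swap2 p.1, p.2) q 1 : Matrix _ _ _) p' q'
      = if q = q' then Mnf a p' (swap2 p.1, p.2) else 0 := by
    by_cases h : q = q'
    · subst h; simp
    · rw [Matrix.mul_single_apply_of_ne _ _ _ _ _ (Ne.symm h), if_neg h]
  have hMA : Mnf a (swap2 p.1, p.2) q' = if p = q' then -(sgn p.1) * X ^ (a p.2) else 0 := by
    rw [Mnf_apply]
    have hs : ((swap2 (swap2 p.1, p.2).1, (swap2 p.1, p.2).2) : Fin 2 × Fin k) = p := by
      obtain ⟨s, i⟩ := p; simp [swap2_swap2]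
    rw [hs, sgn_swap2]
    by_cases h : p = q'
    · rw [if_pos h.symm, if_pos h]
    · rw [if_neg (fun hc => h hc.symm), if_neg h]
  have hMB : Mnf a p' (swap2 p.1, p.2) = if p = p' then sgn p.1 * X ^ (a p.2) else 0 := by
    rw [Mnf_apply]
    by_cases h : p = p'
    · subst h; simp
    · rw [if_neg, if_neg h]
      intro hc
      rw [Prod.mk.injEq] at hc
      exact h (Prod.ext_iff.2 ⟨swap2_inj hc.1, hc.2⟩)
  rw [Matrix.add_apply, hA, hB, hMA, hMB]
  simp only [Matrix.smul_apply, Matrix.sub_apply, smul_eq_mul, single, of_apply]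
  by_cases h1 : p = p' <;> by_cases h2 : q = q' <;> by_cases h3 : q = p' <;>
    by_cases h4 : p = q' <;>
      (try simp only [h1, h2, h3, h4, if_true, and_self, and_true, true_and, if_false,
        and_false, false_and, ite_true, ite_false, if_neg, not_false_iff]) <;>
      (try simp only [ite_self]) <;>
      (first
        | ring1
        | (split_ifs <;> (first | ring1 | tauto)))

/-- Submodule of matrices whose (p,q) entry is divisible by X^(a (p.2 ⊓ q.2)) for pos p < pos q. -/
def Ksub : Submodule (PowerSeries ℂ) (Matrix (Fin 2 × Fin k) (Fin 2 × Fin k) (PowerSeries ℂ)) where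
  carrier := {N | ∀ p q : Fin 2 × Fin k, pos p < pos q → (X : PowerSeries ℂ) ^ (a (p.2 ⊓ q.2)) ∣ N p q}
  add_mem' := fun hN hN' p q h => dvd_add (hN p q h) (hN' p q h)
  zero_mem' := fun p q _ => dvd_zero _
  smul_mem' := fun r N hN p q h => Dvd.dvd.mul_left (hN p q h) r

lemma mem_Ksub {N : Matrix (Fin 2 × Fin k) (Fin 2 × Fin k) (PowerSeries ℂ)} :
    N ∈ Ksub a ↔ ∀ p q : Fin 2 × Fin k, pos p < pos q →
      (X : PowerSeries ℂ) ^ (a (p.2 ⊓ q.2)) ∣ N p q := Iff.rfl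

lemma XF_mem_Ksub (hmono : Monotone a) (p q : Fin 2 × Fin k) :
    ((X : PowerSeries ℂ) ^ (a p.2)) • (single p q 1 - single q p 1) ∈ Ksub a := by
  rw [mem_Ksub]
  intro p' q' _
  have hentry : (((X : PowerSeries ℂ) ^ (a p.2)) •
      (single p q 1 - single q p 1) : Matrix _ _ _) p' q'
      = (X : PowerSeries ℂ) ^ (a p.2) * ((single p q 1 : Matrix _ _ _) p' q'
          - (single q p 1 : Matrix _ _ _) p' q') := by
    simp [Matrix.smul_apply, Matrix.sub_apply]
  rw [hentry]
  by_cases h1 : p = p' ∧ q = q'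
  · have hle : p'.2 ⊓ q'.2 ≤ p.2 := by rw [← h1.1, ← h1.2]; exact inf_le_left
    exact Dvd.dvd.mul_right (pow_dvd_pow X (hmono hle)) _
  · by_cases h2 : q = p' ∧ p = q'
    · have hle : p'.2 ⊓ q'.2 ≤ p.2 := by rw [← h2.1, ← h2.2]; exact inf_le_right
      exact Dvd.dvd.mul_right (pow_dvd_pow X (hmono hle)) _
    · have e1 : single p q (1 : PowerSeries ℂ) p' q' = 0 := by
        simp only [single, of_apply, ite_eq_right_iff]
        intro hc; exact absurd hc h1
      have e2 : single q p (1 : PowerSeries ℂ) p' q' = 0 := by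
        simp only [single, of_apply, ite_eq_right_iff]
        intro hc; exact absurd hc h2
      rw [e1, e2, sub_self, mul_zero]
      exact dvd_zero _

/-- The C(1/2) trick: every skew matrix in `Ksub` lies in any submodule containing all
`X^(a p.2) • (E p q - E q p)`. -/
lemma skew_K_mem {U : Submodule (PowerSeries ℂ) (Matrix (Fin 2 × Fin k) (Fin 2 × Fin k) (PowerSeries ℂ))}
    (hU : ∀ p q : Fin 2 × Fin k,
      ((X : PowerSeries ℂ) ^ (a p.2)) • (single p q 1 - single q p 1) ∈ U)
    (N : Matrix (Fin 2 × Fin k) (Fin 2 × Fin k) (PowerSeries ℂ))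
    (hskew : Nᵀ = -N) (hK : N ∈ Ksub a) : N ∈ U := by
  rw [mem_Ksub] at hK
  set c2 : PowerSeries ℂ := C (2⁻¹ : ℂ) with hc2
  have hsk : ∀ i j, N j i = -(N i j) := by
    intro i j
    have := congrFun (congrFun hskew i) j
    simpa [Matrix.transpose_apply, Matrix.neg_apply] using this
  have e1 : ∑ p : Fin 2 × Fin k, ∑ q : Fin 2 × Fin k,
      (N p q) • single p q (1 : PowerSeries ℂ) = N := by
    conv_rhs => rw [matrix_eq_sum_single N]
    simp [Matrix.smul_single, smul_eq_mul]
  have e2 : ∑ p : Fin 2 × Fin k, ∑ q : Fin 2 × Fin k,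
      (N p q) • single q p (1 : PowerSeries ℂ) = -N := by
    rw [Finset.sum_comm]
    have hterm : ∀ q p : Fin 2 × Fin k, (N p q) • single q p (1 : PowerSeries ℂ)
        = -((N q p) • single q p (1 : PowerSeries ℂ)) := by
      intro q p; rw [hsk q p, neg_smul]
    simp_rw [hterm]
    simp only [Finset.sum_neg_distrib]
    rw [e1]
  have expand : ∀ p q : Fin 2 × Fin k,
      (c2 * N p q) • (single p q (1 : PowerSeries ℂ) - single q p 1)
        = c2 • ((N p q) • single p q (1 : PowerSeries ℂ))
          - c2 • ((N p q) • single q p (1 : PowerSeries ℂ)) := by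
    intro p q
    rw [smul_sub, smul_smul, smul_smul]
  have hrepr : ∑ p : Fin 2 × Fin k, ∑ q : Fin 2 × Fin k,
      (c2 * N p q) • (single p q (1 : PowerSeries ℂ) - single q p 1) = N := by
    simp_rw [expand]
    simp only [Finset.sum_sub_distrib, ← Finset.smul_sum]
    rw [e1, e2, smul_neg, sub_neg_eq_add, ← add_smul]
    have h2 : c2 + c2 = 1 := by
      rw [hc2, ← map_add]
      norm_num
    rw [h2, one_smul]
  rw [← hrepr]
  apply Submodule.sum_mem
  intro p _
  apply Submodule.sum_mem
  intro q _
  rcases lt_trichotomy (pos p) (pos q) with hlt | heq | hgt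
  · obtain ⟨r, hr⟩ := hK p q hlt
    have hq : p.2 ⊓ q.2 = p.2 := inf_eq_left.2 (pos_lt_le hlt)
    rw [hq] at hr
    rw [hr, show c2 * ((X : PowerSeries ℂ) ^ (a p.2) * r)
      = (c2 * r) * (X ^ (a p.2)) from by ring, ← smul_smul]
    exact Submodule.smul_mem _ _ (hU p q)
  · rw [pos_inj heq, sub_self, smul_zero]
    exact Submodule.zero_mem _
  · obtain ⟨r, hr⟩ := hK q p hgt
    have hq : q.2 ⊓ p.2 = q.2 := inf_eq_left.2 (pos_lt_le hgt)
    rw [hq] at hr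
    have hre : (c2 * N p q) • (single p q (1 : PowerSeries ℂ) - single q p 1)
        = (c2 * r) • (((X : PowerSeries ℂ) ^ (a q.2)) •
            (single q p (1 : PowerSeries ℂ) - single p q 1)) := by
      rw [hsk q p, hr, smul_smul,
        show (single p q (1 : PowerSeries ℂ) - single q p 1)
          = -(single q p (1 : PowerSeries ℂ) - single p q 1) from (neg_sub _ _).symm,
        smul_neg, ← neg_smul]
      congr 1
      ring
    rw [hre]
    exact Submodule.smul_mem _ _ (hU q p)

lemma coeff_mul_aux (r g : PowerSeries ℂ) (n j : ℕ) (hj : j ≤ n)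
    (hg : ∀ i < n, coeff i g = 0) :
    coeff j (r * g) = constantCoeff r * coeff j g := by
  rw [PowerSeries.coeff_mul, Finset.sum_eq_single (0, j)]
  · rw [coeff_zero_eq_constantCoeff]
  · rintro ⟨u, v⟩ hmem hne
    rw [Finset.HasAntidiagonal.mem_antidiagonal] at hmem
    have hu : u ≠ 0 := by
      rintro rfl
      exact hne (by simpa using congrArg (Prod.mk (0:ℕ)) (by omega : v = j))
    have hv : v < n := by omega
    rw [hg v hv, mul_zero]
  · intro hnm
    exact absurd (Finset.HasAntidiagonal.mem_antidiagonal.2 (by omega)) hnm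

lemma coeff_nat_pow (n m i : ℕ) :
    coeff i ((n : PowerSeries ℂ) * X ^ m) = if i = m then (n : ℂ) else 0 := by
  have hcast : ((n : ℕ) : PowerSeries ℂ) = C (n : ℂ) := (map_natCast (C (R := ℂ)) n).symm
  rw [hcast, PowerSeries.coeff_C_mul, PowerSeries.coeff_X_pow]
  split_ifs <;> simp

lemma coeff_sgn_nat (s : Fin 2) (n m i : ℕ) :
    coeff i (sgn s * ((n : PowerSeries ℂ) * X ^ m))
      = if i = m then (if s.val = 0 then (n : ℂ) else -(n : ℂ)) else 0 := by
  rw [sgn]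
  split_ifs with h h1 h2 <;>
    simp_all [coeff_nat_pow, neg_one_mul]

def Dmat : Matrix (Fin 2 × Fin k) (Fin 2 × Fin k) (PowerSeries ℂ) :=
  (Mnf a).map ⇑(PowerSeries.derivative ℂ)

lemma dd_pos_of_fin {p : (Fin 2 × Fin k) × (Fin 2 × Fin k)} (j : Fin (dd a p)) :
    pos p.1 < pos p.2 := by
  by_contra h
  have hj := j.isLt
  simp only [dd, if_neg h] at hj
  omega

lemma phi_rD (ha : ∀ i, 1 ≤ a i) (hmono : Monotone a) (r : PowerSeries ℂ) :
    phi a (r • Dmat a) = (constantCoeff r) • phi a (Dmat a) := by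
  funext p j
  have hlt : pos p.1 < pos p.2 := dd_pos_of_fin a j
  have hjval : (j : ℕ) < a (p.1.2 ⊓ p.2.2) := by
    have hj := j.isLt
    simpa only [dd, if_pos hlt] using hj
  have hja : (j : ℕ) ≤ a p.1.2 - 1 := by
    have h1 := hmono (inf_le_left : p.1.2 ⊓ p.2.2 ≤ p.1.2)
    have h2 := ha p.1.2
    omega
  simp only [phi_apply, Pi.smul_apply, smul_eq_mul, Matrix.smul_apply]
  show coeff j (r * (Dmat a) p.1 p.2) = constantCoeff r * coeff j ((Dmat a) p.1 p.2)
  rw [Dmat, Dm_apply]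
  split_ifs with hcond
  · exact coeff_mul_aux r _ (a p.1.2 - 1) j hja
      (fun i hi => by rw [coeff_sgn_nat, if_neg (by omega)])
  · simp

lemma phi_K_zero {N : Matrix (Fin 2 × Fin k) (Fin 2 × Fin k) (PowerSeries ℂ)}
    (hN : N ∈ Ksub a) : phi a N = 0 := by
  funext p j
  have hlt : pos p.1 < pos p.2 := dd_pos_of_fin a j
  have hjval : (j : ℕ) < a (p.1.2 ⊓ p.2.2) := by
    have hj := j.isLt
    simpa only [dd, if_pos hlt] using hj
  have := (PowerSeries.X_pow_dvd_iff.1 (((mem_Ksub a).1 hN) p.1 p.2 hlt)) j hjval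
  simpa [phi_apply] using this

lemma phi_D_ne (hk : 1 ≤ k) (ha : ∀ i, 1 ≤ a i) : phi a (Dmat a) ≠ 0 := by
  intro h
  set i0 : Fin k := ⟨0, hk⟩ with hi0
  have hlt : pos (((0 : Fin 2), i0)) < pos (((1 : Fin 2), i0)) := by simp [pos]
  have hdd : dd a ((((0 : Fin 2), i0)), (((1 : Fin 2), i0))) = a i0 := by
    simp only [dd, if_pos hlt]
    simp
  have hj : a i0 - 1 < dd a ((((0 : Fin 2), i0)), (((1 : Fin 2), i0))) := by
    rw [hdd]; have := ha i0; omega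
  have hcf := congrFun (congrFun h ((((0 : Fin 2), i0)), (((1 : Fin 2), i0)))) ⟨a i0 - 1, hj⟩
  rw [phi_apply, Pi.zero_apply] at hcf
  have hD : (Dmat a) ((0 : Fin 2), i0) ((1 : Fin 2), i0)
      = sgn (0 : Fin 2) * ((a i0 : PowerSeries ℂ) * X ^ (a i0 - 1)) := by
    rw [Dmat, Dm_apply, if_pos]
    rfl
  rw [hD, coeff_sgn_nat] at hcf
  simp only [if_pos rfl] at hcf
  rw [if_pos (by rfl : ((0 : Fin 2) : Fin 2).val = 0)] at hcf
  exact absurd hcf (Nat.cast_ne_zero.2 (by have := ha i0; omega))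

lemma Mnf_skew : (Mnf a)ᵀ = -(Mnf a) := by
  apply Matrix.ext
  intro p q
  rw [Matrix.transpose_apply, Matrix.neg_apply, Mnf_apply, Mnf_apply]
  by_cases h : q = (swap2 p.1, p.2)
  · subst h
    rw [if_pos, if_pos rfl]
    · show sgn (swap2 p.1) * X ^ (a p.2) = -(sgn p.1 * X ^ (a p.2))
      rw [sgn_swap2, neg_mul]
    · show p = (swap2 (swap2 p.1), p.2)
      rw [swap2_swap2]
  · rw [if_neg h, if_neg, neg_zero]
    intro hc
    apply h
    have h1 : p.1 = swap2 q.1 := by rw [hc]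
    have h2 : p.2 = q.2 := by rw [hc]
    have h3 : swap2 p.1 = q.1 := by rw [h1, swap2_swap2]
    exact Prod.ext_iff.2 ⟨h3.symm, h2.symm⟩

lemma Dmat_skew : (Dmat a)ᵀ = -(Dmat a) := by
  apply Matrix.ext
  intro p q
  have h1 : Mnf a q p = -(Mnf a p q) := by
    have := congrFun (congrFun (Mnf_skew a) p) q
    simpa [Matrix.transpose_apply, Matrix.neg_apply] using this
  show (PowerSeries.derivative ℂ) (Mnf a q p) = -((PowerSeries.derivative ℂ) (Mnf a p q))
  rw [h1, map_neg]

lemma gens_mem_Ksub (hmono : Monotone a) (j l : Fin 2 × Fin k) :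
    single j l 1 * Mnf a + Mnf a * single l j 1 ∈ Ksub a := by
  have h := gen_eq a (swap2 l.1, l.2) j
  simp only [swap2_swap2, Prod.mk.eta] at h
  rw [h]
  exact Submodule.smul_mem _ _ (XF_mem_Ksub a hmono (swap2 l.1, l.2) j)

lemma XF_mem_span (p q : Fin 2 × Fin k) :
    ((X : PowerSeries ℂ) ^ (a p.2)) • (single p q 1 - single q p 1) ∈
      Submodule.span (PowerSeries ℂ)
        ({(Mnf a).map ⇑(PowerSeries.derivative ℂ)} ∪
          Set.range (fun pr : (Fin 2 × Fin k) × (Fin 2 × Fin k) =>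
            single pr.1 pr.2 (1 : PowerSeries ℂ) * Mnf a +
              Mnf a * single pr.2 pr.1 (1 : PowerSeries ℂ))) := by
  have hmem : single q (swap2 p.1, p.2) (1 : PowerSeries ℂ) * Mnf a +
      Mnf a * single (swap2 p.1, p.2) q (1 : PowerSeries ℂ) ∈
      Submodule.span (PowerSeries ℂ)
        ({(Mnf a).map ⇑(PowerSeries.derivative ℂ)} ∪
          Set.range (fun pr : (Fin 2 × Fin k) × (Fin 2 × Fin k) =>
            single pr.1 pr.2 (1 : PowerSeries ℂ) * Mnf a +
              Mnf a * single pr.2 pr.1 (1 : PowerSeries ℂ))) :=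
    Submodule.subset_span (Or.inr ⟨(q, (swap2 p.1, p.2)), rfl⟩)
  have hid : ((X : PowerSeries ℂ) ^ (a p.2)) •
      (single p q (1 : PowerSeries ℂ) - single q p 1)
      = sgn p.1 • (single q (swap2 p.1, p.2) (1 : PowerSeries ℂ) * Mnf a +
          Mnf a * single (swap2 p.1, p.2) q (1 : PowerSeries ℂ)) := by
    rw [gen_eq, smul_smul, sgn_mul_sgn, one_smul]
  rw [hid]
  exact Submodule.smul_mem _ _ hmem

lemma hterm_dd (i m : Fin k) :
    dd a (((0 : Fin 2), i), ((0 : Fin 2), m)) + dd a (((0 : Fin 2), i), ((1 : Fin 2), m))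
      + (dd a (((1 : Fin 2), i), ((0 : Fin 2), m)) + dd a (((1 : Fin 2), i), ((1 : Fin 2), m)))
    = (if i < m then 4 * a i else 0) + (if m = i then a i else 0) := by
  simp only [dd, pos, Fin.val_zero, Fin.val_one]
  rcases lt_trichotomy i m with hlt | heq | hgt
  · have hv : i.val < m.val := hlt
    have hinf : i ⊓ m = i := inf_eq_left.2 (le_of_lt hlt)
    simp only [hinf, if_pos hlt, if_neg (ne_of_gt hlt)]
    split_ifs <;> omega
  · subst heq
    have hinf : i ⊓ i = i := inf_idem i
    simp only [hinf, if_neg (lt_irrefl i), if_pos rfl]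
    split_ifs <;> omega
  · have hv : m.val < i.val := hgt
    have e1 : ¬ (2 * i.val + 0 < 2 * m.val + 0) := by omega
    have e2 : ¬ (2 * i.val + 0 < 2 * m.val + 1) := by omega
    have e3 : ¬ (2 * i.val + 1 < 2 * m.val + 0) := by omega
    have e4 : ¬ (2 * i.val + 1 < 2 * m.val + 1) := by omega
    simp only [e1, e2, e3, e4, if_false, if_neg (asymm hgt), if_neg (ne_of_lt hgt)]

lemma hcount_dd (i : Fin k) :
    ∑ m : Fin k, ((if i < m then 4 * a i else 0) + (if m = i then a i else 0))
      = (4 * (k - 1 - (i : ℕ)) + 1) * a i := by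
  rw [Finset.sum_add_distrib]
  have c1 : ∑ m : Fin k, (if i < m then 4 * a i else 0) = (Finset.Ioi i).card * (4 * a i) := by
    rw [← Finset.sum_filter, Finset.filter_lt_eq_Ioi, Finset.sum_const, smul_eq_mul]
  have c2 : ∑ m : Fin k, (if m = i then a i else 0) = a i := by
    rw [Finset.sum_ite_eq' Finset.univ i (fun _ => a i), if_pos (Finset.mem_univ i)]
  rw [c1, c2, Fin.card_Ioi]
  ring

lemma sum_dd : ∑ p : (Fin 2 × Fin k) × (Fin 2 × Fin k), dd a p
    = ∑ i : Fin k, (4 * (k - 1 - (i : ℕ)) + 1) * a i := by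
  have key : ∀ i : Fin k, (4 * (k - 1 - (i : ℕ)) + 1) * a i
      = (∑ m : Fin k, (dd a (((0 : Fin 2), i), ((0 : Fin 2), m))
            + dd a (((0 : Fin 2), i), ((1 : Fin 2), m))))
        + ∑ m : Fin k, (dd a (((1 : Fin 2), i), ((0 : Fin 2), m))
            + dd a (((1 : Fin 2), i), ((1 : Fin 2), m))) := by
    intro i
    rw [← hcount_dd a i, ← Finset.sum_add_distrib]
    refine Finset.sum_congr rfl (fun m _ => ?_)
    rw [← hterm_dd a i m]
  rw [Fintype.sum_prod_type]
  have inner : ∀ p : Fin 2 × Fin k, ∑ q : Fin 2 × Fin k, dd a (p, q)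
      = ∑ m : Fin k, dd a (p, ((0 : Fin 2), m)) + ∑ m : Fin k, dd a (p, ((1 : Fin 2), m)) := by
    intro p
    rw [Fintype.sum_prod_type, Fin.sum_univ_two]
  simp_rw [inner]
  rw [Fintype.sum_prod_type, Fin.sum_univ_two, ← Finset.sum_add_distrib]
  refine Finset.sum_congr rfl (fun i _ => ?_)
  rw [key i]
  try rw [← Finset.sum_add_distrib]
  try rw [← Finset.sum_add_distrib]

end
end TjAux

open TjAux in
/-- The Tjurina number of the one-variable normal form ⊕ᵢ x^{a_i}·J₂ (Proposition 5.1):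
the codimension over ℂ of the extended Sk-tangent space inside the module of
skew-symmetric matrix families is (Σ_{i=1}^{k} (4(k−i)+1)·a_i) − 1.
Matrices of size 2k are indexed by `Fin 2 × Fin k`, the normal form being
`blockDiagonal (fun i => x^{a i} • J₂)` with J₂ = [[0,1],[−1,0]]. -/
theorem tjurina_one_parameter_normal_form (k : ℕ) (hk : 1 ≤ k) (a : Fin k → ℕ)
    (ha : ∀ i, 1 ≤ a i) (hmono : Monotone a)
    (M : Matrix (Fin 2 × Fin k) (Fin 2 × Fin k) (PowerSeries ℂ))
    (hM : M = Matrix.blockDiagonal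
      (fun i => ((PowerSeries.X : PowerSeries ℂ) ^ (a i)) • !![(0 : PowerSeries ℂ), 1; -1, 0]))
    (S : Submodule (PowerSeries ℂ) (Matrix (Fin 2 × Fin k) (Fin 2 × Fin k) (PowerSeries ℂ)))
    (hS : ∀ N, N ∈ S ↔ Nᵀ = -N)
    (T : Submodule (PowerSeries ℂ) (Matrix (Fin 2 × Fin k) (Fin 2 × Fin k) (PowerSeries ℂ)))
    (hT : T = Submodule.span (PowerSeries ℂ)
      ({M.map (PowerSeries.derivative ℂ)} ∪
        Set.range (fun p : (Fin 2 × Fin k) × (Fin 2 × Fin k) =>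
          Matrix.single p.1 p.2 (1 : PowerSeries ℂ) * M +
            M * Matrix.single p.2 p.1 (1 : PowerSeries ℂ)))) :
    Module.finrank ℂ (↥S ⧸ (T.comap S.subtype)) =
      (∑ i : Fin k, (4 * (k - 1 - (i : ℕ)) + 1) * a i) - 1 := by
  classical
  let L : Submodule ℂ (Wsp a) := Submodule.span ℂ {phi a (Dmat a)}
  let ψ : ↥S →ₗ[ℂ] Wsp a := (phi a).comp ((S.subtype).restrictScalars ℂ)
  let Φ : ↥S →ₗ[ℂ] (Wsp a ⧸ L) := L.mkQ.comp ψ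
  have hψsurj : Function.Surjective ψ := by
    intro w
    exact ⟨⟨preim a w, (hS _).2 (preim_skew a w)⟩, phi_preim a w⟩
  have hΦsurj : Function.Surjective Φ := (Submodule.mkQ_surjective L).comp hψsurj
  have hT' : T = Submodule.span (PowerSeries ℂ)
      ({Dmat a} ∪
        Set.range (fun pr : (Fin 2 × Fin k) × (Fin 2 × Fin k) =>
          Matrix.single pr.1 pr.2 (1 : PowerSeries ℂ) * Mnf a +
            Mnf a * Matrix.single pr.2 pr.1 (1 : PowerSeries ℂ))) := by
    rw [hT, hM]
    rfl
  have hDmem : Dmat a ∈ T := by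
    rw [hT']
    exact Submodule.subset_span (Or.inl rfl)
  have hkeyiff : ∀ N : Matrix (Fin 2 × Fin k) (Fin 2 × Fin k) (PowerSeries ℂ),
      Nᵀ = -N → (phi a N ∈ L ↔ N ∈ T) := by
    intro N hsk
    constructor
    · intro hL
      obtain ⟨z, hz⟩ := Submodule.mem_span_singleton.1 hL
      set N' := N - (PowerSeries.C z) • Dmat a with hN'
      have hphiN' : phi a N' = 0 := by
        rw [hN', map_sub, phi_rD a ha hmono, PowerSeries.constantCoeff_C, ← hz, sub_self]
      have hK : N' ∈ Ksub a := by
        rw [mem_Ksub]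
        intro p q hpq
        rw [PowerSeries.X_pow_dvd_iff]
        intro m hm
        have hj : m < dd a (p, q) := by simp only [dd, if_pos hpq]; exact hm
        have := congrFun (congrFun hphiN' (p, q)) ⟨m, hj⟩
        simpa [phi_apply] using this
      have hsk' : N'ᵀ = -N' := by
        rw [hN', Matrix.transpose_sub, hsk, Matrix.transpose_smul, Dmat_skew, smul_neg]
        abel
      have hmem' : N' ∈ T := by
        rw [hT']
        exact skew_K_mem a (fun p q => XF_mem_span a p q) N' hsk' hK
      have hdecomp : N = N' + (PowerSeries.C z) • Dmat a := by
        rw [hN']; abel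
      rw [hdecomp]
      exact Submodule.add_mem _ hmem' (Submodule.smul_mem _ _ hDmem)
    · intro hNT
      rw [hT', Submodule.span_union] at hNT
      obtain ⟨u, hu, v, hv, rfl⟩ := Submodule.mem_sup.1 hNT
      obtain ⟨r, rfl⟩ := Submodule.mem_span_singleton.1 hu
      have hvK : v ∈ Ksub a := by
        refine Submodule.span_le.2 ?_ hv
        rintro _ ⟨pr, rfl⟩
        exact gens_mem_Ksub a hmono pr.1 pr.2
      rw [map_add, phi_rD a ha hmono, phi_K_zero a hvK, add_zero]
      exact Submodule.smul_mem _ _ (Submodule.mem_span_singleton_self _)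
  have hker : LinearMap.ker Φ = (T.comap S.subtype).restrictScalars ℂ := by
    ext x
    rw [LinearMap.mem_ker]
    have hΦx : Φ x = Submodule.Quotient.mk (ψ x) := rfl
    rw [hΦx, Submodule.Quotient.mk_eq_zero]
    have hx : ((x : Matrix (Fin 2 × Fin k) (Fin 2 × Fin k) (PowerSeries ℂ)))ᵀ = -(x : _) :=
      (hS _).1 x.2
    have hiff := hkeyiff _ hx
    rw [Submodule.restrictScalars_mem, Submodule.mem_comap]
    exact hiff
  have hfr : Module.finrank ℂ (↥S ⧸ T.comap S.subtype) = Module.finrank ℂ (Wsp a ⧸ L) :=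
    (((Submodule.Quotient.restrictScalarsEquiv ℂ (T.comap S.subtype)).symm.trans
      (Submodule.quotEquivOfEq _ _ hker.symm)).trans
        (Φ.quotKerEquivOfSurjective hΦsurj)).finrank_eq
  rw [hfr]
  have hWfin : Module.finrank ℂ (Wsp a) = ∑ i : Fin k, (4 * (k - 1 - (i : ℕ)) + 1) * a i := by
    rw [Module.finrank_pi_fintype, ← sum_dd a]
    exact Finset.sum_congr rfl (fun p _ => by rw [Module.finrank_pi, Fintype.card_fin])
  have hL1 : Module.finrank ℂ L = 1 := finrank_span_singleton (phi_D_ne a hk ha)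
  have hq := Submodule.finrank_quotient_add_finrank L
  rw [hL1, hWfin] at hq
  omega
end

section
/- Let R = MvPolynomial (Fin s) ℂ, let M̌ be a 2×2 matrix over R, let I ⊆ R be the ideal generated by the four entries of M̌, and let T_Sq(M̌) be the R-submodule of Matrix (Fin 2) (Fin 2) R generated by the entrywise partial derivatives of M̌ with respect to each variable together with all products E·M̌ and M̌·E, E ranging over the four elementary 2×2 matrices. Let M = fromBlocks 0 M̌ (−M̌ᵀ) 0, let S be the R-submodule of skew-symmetric (Nᵀ = −N) 4×4 matrices over R, and let T_Sk(M) ⊆ S be the R-submodule generated by the entrywise partial derivatives of M with respect to each variable together with the matrices E·M + M·Eᵀ, E ranging over the sixteen elementary 4×4 matrices. If τ = dim_ℂ (Matrix (Fin 2) (Fin 2) R / T_Sq(M̌)) and κ = dim_ℂ (R / I) are both finite, then dim_ℂ (S / T_Sk(M)) = τ + 2κ. -/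
open Matrix

section TjurinaAux
variable {R : Type*} [CommRing R]

/-- extract (top-right block, a, d) from a 4×4 matrix -/
noncomputable def toTripleAux : Matrix (Fin 2 ⊕ Fin 2) (Fin 2 ⊕ Fin 2) R →ₗ[R]
    (Matrix (Fin 2) (Fin 2) R × R × R) where
  toFun N := (Matrix.of fun i j => N (Sum.inl i) (Sum.inr j),
    N (Sum.inl 0) (Sum.inl 1), N (Sum.inr 0) (Sum.inr 1))
  map_add' N₁ N₂ := by ext <;> simp
  map_smul' r N := by ext <;> simp

noncomputable def ofTripleAux : (Matrix (Fin 2) (Fin 2) R × R × R) →ₗ[R]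
    Matrix (Fin 2 ⊕ Fin 2) (Fin 2 ⊕ Fin 2) R where
  toFun x := Matrix.fromBlocks (x.2.1 • !![0,1;-1,0]) x.1 (-x.1ᵀ) (x.2.2 • !![0,1;-1,0])
  map_add' x y := by
    ext (i|i) (j|j) <;> fin_cases i <;> fin_cases j <;>
      simp [Matrix.fromBlocks] <;> ring
  map_smul' r x := by
    ext (i|i) (j|j) <;> fin_cases i <;> fin_cases j <;>
      simp [Matrix.fromBlocks] <;> ring

lemma skew_ofTripleAux (x : Matrix (Fin 2) (Fin 2) R × R × R) :
    (ofTripleAux x)ᵀ = -(ofTripleAux x) := by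
  ext (i|i) (j|j) <;> fin_cases i <;> fin_cases j <;>
    simp [ofTripleAux, Matrix.fromBlocks]

lemma toTripleAux_ofTripleAux (x : Matrix (Fin 2) (Fin 2) R × R × R) :
    toTripleAux (ofTripleAux x) = x := by
  obtain ⟨B, a, d⟩ := x
  refine Prod.ext ?_ (Prod.ext ?_ ?_)
  · ext i j; simp [toTripleAux, ofTripleAux, Matrix.fromBlocks]
  · simp [toTripleAux, ofTripleAux, Matrix.fromBlocks]
  · simp [toTripleAux, ofTripleAux, Matrix.fromBlocks]

lemma ofTripleAux_toTripleAux [IsDomain R] [CharZero R]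
    (N : Matrix (Fin 2 ⊕ Fin 2) (Fin 2 ⊕ Fin 2) R) (hN : Nᵀ = -N) :
    ofTripleAux (toTripleAux N) = N := by
  have h : ∀ i j, N j i = - N i j := by
    intro i j
    have := congrFun (congrFun hN i) j
    simpa [Matrix.transpose_apply] using this
  have hd : ∀ i, N i i = 0 := by
    intro i
    have := h i i
    have h2 : (2 : R) * N i i = 0 := by linear_combination this
    rcases mul_eq_zero.mp h2 with h'|h'
    · exact absurd h' two_ne_zero
    · exact h'
  ext (i|i) (j|j) <;> fin_cases i <;> fin_cases j <;>
    simp [toTripleAux, ofTripleAux, Matrix.fromBlocks, hd] <;>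
    rw [h] <;> ring_nf <;> simp [hd]

variable (M' : Matrix (Fin 2) (Fin 2) R)

lemma toTripleAux_map (f : R → R) (hf : f 0 = 0) :
    toTripleAux ((Matrix.fromBlocks 0 M' (-M'ᵀ) 0).map f)
      = (M'.map f, 0, 0) := by
  refine Prod.ext ?_ (Prod.ext ?_ ?_) <;>
    simp [toTripleAux, Matrix.fromBlocks, hf]
  rfl

lemma toTripleAux_gen_ll (i j : Fin 2) :
    toTripleAux (Matrix.single (Sum.inl i) (Sum.inl j) (1:R) * (Matrix.fromBlocks 0 M' (-M'ᵀ) 0)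
      + (Matrix.fromBlocks 0 M' (-M'ᵀ) 0) * (Matrix.single (Sum.inl i) (Sum.inl j) (1:R))ᵀ)
    = (Matrix.single i j 1 * M', 0, 0) := by
  refine Prod.ext ?_ (Prod.ext ?_ ?_) <;>
  · try ext a b
    simp [toTripleAux, Matrix.mul_apply, Matrix.single, Matrix.fromBlocks,
      Fintype.sum_sum_type, Fin.sum_univ_two]

lemma toTripleAux_gen_rr (i j : Fin 2) :
    toTripleAux (Matrix.single (Sum.inr i) (Sum.inr j) (1:R) * (Matrix.fromBlocks 0 M' (-M'ᵀ) 0)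
      + (Matrix.fromBlocks 0 M' (-M'ᵀ) 0) * (Matrix.single (Sum.inr i) (Sum.inr j) (1:R))ᵀ)
    = (M' * Matrix.single j i 1, 0, 0) := by
  refine Prod.ext ?_ (Prod.ext ?_ ?_) <;>
  · try ext a b
    simp [toTripleAux, Matrix.mul_apply, Matrix.single, Matrix.fromBlocks,
      Fintype.sum_sum_type, Fin.sum_univ_two, and_comm]

lemma toTripleAux_gen_lr (i j : Fin 2) :
    toTripleAux (Matrix.single (Sum.inl i) (Sum.inr j) (1:R) * (Matrix.fromBlocks 0 M' (-M'ᵀ) 0)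
      + (Matrix.fromBlocks 0 M' (-M'ᵀ) 0) * (Matrix.single (Sum.inl i) (Sum.inr j) (1:R))ᵀ)
    = (0, (if i = 1 then M' 0 j else - M' 1 j), 0) := by
  refine Prod.ext ?_ (Prod.ext ?_ ?_) <;>
  · try ext a b
    fin_cases i <;>
    simp [toTripleAux, Matrix.mul_apply, Matrix.single, Matrix.fromBlocks,
      Fintype.sum_sum_type, Fin.sum_univ_two]

lemma toTripleAux_gen_rl (i j : Fin 2) :
    toTripleAux (Matrix.single (Sum.inr i) (Sum.inl j) (1:R) * (Matrix.fromBlocks 0 M' (-M'ᵀ) 0)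
      + (Matrix.fromBlocks 0 M' (-M'ᵀ) 0) * (Matrix.single (Sum.inr i) (Sum.inl j) (1:R))ᵀ)
    = (0, 0, (if i = 1 then - M' j 0 else M' j 1)) := by
  refine Prod.ext ?_ (Prod.ext ?_ ?_) <;>
  · try ext a b
    fin_cases i <;>
    simp [toTripleAux, Matrix.mul_apply, Matrix.single, Matrix.fromBlocks,
      Fintype.sum_sum_type, Fin.sum_univ_two]

end TjurinaAux

set_option maxHeartbeats 1000000 in
/-- Formula (5.2) (Etautriv): for the trivial suspension M = fromBlocks 0 M̌ (−M̌ᵀ) 0 of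
a 2×2 polynomial matrix family M̌, the Tjurina numbers satisfy
τ_Sk(M) = τ_Sq(M̌) + 2·dim ℂ(R/I), where I is the ideal generated by the entries
of M̌. -/
theorem tjurina_trivial_suspension (s : ℕ)
    (M' : Matrix (Fin 2) (Fin 2) (MvPolynomial (Fin s) ℂ))
    (I : Ideal (MvPolynomial (Fin s) ℂ))
    (hI : I = Ideal.span {M' 0 0, M' 0 1, M' 1 0, M' 1 1})
    (TSq : Submodule (MvPolynomial (Fin s) ℂ)
      (Matrix (Fin 2) (Fin 2) (MvPolynomial (Fin s) ℂ)))
    (hTSq : TSq = Submodule.span (MvPolynomial (Fin s) ℂ)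
      (Set.range (fun i : Fin s => M'.map (MvPolynomial.pderiv i)) ∪
       Set.range (fun p : Fin 2 × Fin 2 =>
         Matrix.single p.1 p.2 (1 : MvPolynomial (Fin s) ℂ) * M') ∪
       Set.range (fun p : Fin 2 × Fin 2 =>
         M' * Matrix.single p.1 p.2 (1 : MvPolynomial (Fin s) ℂ))))
    (M : Matrix (Fin 2 ⊕ Fin 2) (Fin 2 ⊕ Fin 2) (MvPolynomial (Fin s) ℂ))
    (hM : M = Matrix.fromBlocks 0 M' (-M'ᵀ) 0)
    (S : Submodule (MvPolynomial (Fin s) ℂ)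
      (Matrix (Fin 2 ⊕ Fin 2) (Fin 2 ⊕ Fin 2) (MvPolynomial (Fin s) ℂ)))
    (hS : ∀ N, N ∈ S ↔ Nᵀ = -N)
    (TSk : Submodule (MvPolynomial (Fin s) ℂ)
      (Matrix (Fin 2 ⊕ Fin 2) (Fin 2 ⊕ Fin 2) (MvPolynomial (Fin s) ℂ)))
    (hTSk : TSk = Submodule.span (MvPolynomial (Fin s) ℂ)
      (Set.range (fun i : Fin s => M.map (MvPolynomial.pderiv i)) ∪
       Set.range (fun p : (Fin 2 ⊕ Fin 2) × (Fin 2 ⊕ Fin 2) =>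
         Matrix.single p.1 p.2 (1 : MvPolynomial (Fin s) ℂ) * M +
           M * (Matrix.single p.1 p.2 (1 : MvPolynomial (Fin s) ℂ))ᵀ)))
    (hτ : FiniteDimensional ℂ
      (Matrix (Fin 2) (Fin 2) (MvPolynomial (Fin s) ℂ) ⧸ TSq))
    (hκ : FiniteDimensional ℂ (MvPolynomial (Fin s) ℂ ⧸ I)) :
    Module.finrank ℂ (↥S ⧸ (TSk.comap S.subtype)) =
      Module.finrank ℂ (Matrix (Fin 2) (Fin 2) (MvPolynomial (Fin s) ℂ) ⧸ TSq) +
        2 * Module.finrank ℂ (MvPolynomial (Fin s) ℂ ⧸ I) := by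
  subst hM
  -- M is skew
  have hMskew : (Matrix.fromBlocks 0 M' (-M'ᵀ) 0)ᵀ
      = -(Matrix.fromBlocks 0 M' (-M'ᵀ) 0) := by
    rw [Matrix.fromBlocks_transpose]
    rw [show (-(Matrix.fromBlocks 0 M' (-M'ᵀ) 0))
        = Matrix.fromBlocks (-0) (-M') (-(-M'ᵀ)) (-0) from Matrix.fromBlocks_neg _ _ _ _]
    simp
  have hMentries : ∀ a b : Fin 2, M' a b ∈ I := by
    intro a b
    rw [hI]
    fin_cases a <;> fin_cases b <;> refine Ideal.subset_span ?_ <;> simp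
  -- each generator of TSk is skew, so TSk ≤ S
  have hTSkS : TSk ≤ S := by
    rw [hTSk, Submodule.span_le]
    rintro x (⟨i, rfl⟩ | ⟨p, rfl⟩) <;> rw [SetLike.mem_coe, hS]
    · rw [← Matrix.transpose_map, hMskew]
      refine Matrix.ext fun a b => ?_
      simp
    · simp only [Matrix.transpose_add, Matrix.transpose_mul, Matrix.transpose_transpose,
        hMskew, Matrix.neg_mul, Matrix.mul_neg, neg_add_rev]
  -- the key equality of submodules
  have hmain : Submodule.map toTripleAux TSk
      = Submodule.prod TSq (Submodule.prod (I : Submodule (MvPolynomial (Fin s) ℂ)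
          (MvPolynomial (Fin s) ℂ)) I) := by
    apply le_antisymm
    · rw [Submodule.map_le_iff_le_comap, hTSk, Submodule.span_le]
      rintro N (⟨i, rfl⟩ | ⟨⟨pi, pj⟩, rfl⟩) <;>
        simp only [SetLike.mem_coe, Submodule.mem_comap]
      · rw [toTripleAux_map M' _ (map_zero _)]
        exact Submodule.mem_prod.mpr
          ⟨hTSq ▸ Submodule.subset_span (Or.inl (Or.inl ⟨i, rfl⟩)), zero_mem I, zero_mem I⟩
      · rcases pi with i|i <;> rcases pj with j|j
        · rw [toTripleAux_gen_ll]
          exact Submodule.mem_prod.mpr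
            ⟨hTSq ▸ Submodule.subset_span (Or.inl (Or.inr ⟨(i, j), rfl⟩)),
              zero_mem I, zero_mem I⟩
        · rw [toTripleAux_gen_lr]
          refine Submodule.mem_prod.mpr ⟨zero_mem TSq, ?_, zero_mem I⟩
          split <;> [exact hMentries 0 j; exact neg_mem (hMentries 1 j)]
        · rw [toTripleAux_gen_rl]
          refine Submodule.mem_prod.mpr ⟨zero_mem TSq, zero_mem I, ?_⟩
          split <;> [exact neg_mem (hMentries j 0); exact hMentries j 1]
        · rw [toTripleAux_gen_rr]
          exact Submodule.mem_prod.mpr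
            ⟨hTSq ▸ Submodule.subset_span (Or.inr ⟨(j, i), rfl⟩), zero_mem I, zero_mem I⟩
    · rintro ⟨B, a, d⟩ hx
      rw [Submodule.mem_prod] at hx
      obtain ⟨hB, had⟩ := hx
      rw [Submodule.mem_prod] at had
      obtain ⟨ha, hd⟩ := had
      have key1 : ∀ B : Matrix (Fin 2) (Fin 2) (MvPolynomial (Fin s) ℂ), B ∈ TSq →
          ((B, 0, 0) : Matrix (Fin 2) (Fin 2) (MvPolynomial (Fin s) ℂ)
            × MvPolynomial (Fin s) ℂ × MvPolynomial (Fin s) ℂ) ∈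
            Submodule.map toTripleAux TSk := by
        intro B hB
        rw [hTSq] at hB
        refine Submodule.span_induction ?_ ?_ ?_ ?_ hB
        · rintro y ((⟨i, rfl⟩ | ⟨⟨pi, pj⟩, rfl⟩) | ⟨⟨pi, pj⟩, rfl⟩)
          · exact ⟨(Matrix.fromBlocks 0 M' (-M'ᵀ) 0).map (MvPolynomial.pderiv i),
              hTSk ▸ Submodule.subset_span (Or.inl ⟨i, rfl⟩),
              toTripleAux_map M' _ (map_zero _)⟩
          · exact ⟨_, hTSk ▸ Submodule.subset_span (Or.inr ⟨((Sum.inl pi, Sum.inl pj) :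
              (Fin 2 ⊕ Fin 2) × (Fin 2 ⊕ Fin 2)), rfl⟩), toTripleAux_gen_ll M' pi pj⟩
          · exact ⟨_, hTSk ▸ Submodule.subset_span (Or.inr ⟨((Sum.inr pj, Sum.inr pi) :
              (Fin 2 ⊕ Fin 2) × (Fin 2 ⊕ Fin 2)), rfl⟩), toTripleAux_gen_rr M' pj pi⟩
        · exact ⟨0, zero_mem _, map_zero _⟩
        · intro y z _ _ hy hz
          simpa using add_mem hy hz
        · intro r y _ hy
          simpa using Submodule.smul_mem _ r hy
      have memlr : ∀ i j : Fin 2,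
          ((0, (if i = 1 then M' 0 j else - M' 1 j), 0) :
            Matrix (Fin 2) (Fin 2) (MvPolynomial (Fin s) ℂ)
            × MvPolynomial (Fin s) ℂ × MvPolynomial (Fin s) ℂ) ∈
            Submodule.map toTripleAux TSk := fun i j =>
        ⟨_, hTSk ▸ Submodule.subset_span (Or.inr ⟨((Sum.inl i, Sum.inr j) :
          (Fin 2 ⊕ Fin 2) × (Fin 2 ⊕ Fin 2)), rfl⟩), toTripleAux_gen_lr M' i j⟩
      have memrl : ∀ i j : Fin 2,
          ((0, 0, (if i = 1 then - M' j 0 else M' j 1)) :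
            Matrix (Fin 2) (Fin 2) (MvPolynomial (Fin s) ℂ)
            × MvPolynomial (Fin s) ℂ × MvPolynomial (Fin s) ℂ) ∈
            Submodule.map toTripleAux TSk := fun i j =>
        ⟨_, hTSk ▸ Submodule.subset_span (Or.inr ⟨((Sum.inr i, Sum.inl j) :
          (Fin 2 ⊕ Fin 2) × (Fin 2 ⊕ Fin 2)), rfl⟩), toTripleAux_gen_rl M' i j⟩
      have key2 : ∀ a : MvPolynomial (Fin s) ℂ, a ∈ I →
          ((0, a, 0) : Matrix (Fin 2) (Fin 2) (MvPolynomial (Fin s) ℂ)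
            × MvPolynomial (Fin s) ℂ × MvPolynomial (Fin s) ℂ) ∈
            Submodule.map toTripleAux TSk := by
        intro a ha
        rw [hI] at ha
        refine Submodule.span_induction ?_ ?_ ?_ ?_ ha
        · intro y hy
          simp only [Set.mem_insert_iff, Set.mem_singleton_iff] at hy
          rcases hy with rfl | rfl | rfl | rfl
          · simpa using memlr 1 0
          · simpa using memlr 1 1
          · simpa using neg_mem (memlr 0 0)
          · simpa using neg_mem (memlr 0 1)
        · exact ⟨0, zero_mem _, map_zero _⟩
        · intro y z _ _ hy hz
          simpa using add_mem hy hz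
        · intro r y _ hy
          simpa using Submodule.smul_mem _ r hy
      have key3 : ∀ d : MvPolynomial (Fin s) ℂ, d ∈ I →
          ((0, 0, d) : Matrix (Fin 2) (Fin 2) (MvPolynomial (Fin s) ℂ)
            × MvPolynomial (Fin s) ℂ × MvPolynomial (Fin s) ℂ) ∈
            Submodule.map toTripleAux TSk := by
        intro d hd
        rw [hI] at hd
        refine Submodule.span_induction ?_ ?_ ?_ ?_ hd
        · intro y hy
          simp only [Set.mem_insert_iff, Set.mem_singleton_iff] at hy
          rcases hy with rfl | rfl | rfl | rfl
          · simpa using neg_mem (memrl 1 0)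
          · simpa using memrl 0 0
          · simpa using neg_mem (memrl 1 1)
          · simpa using memrl 0 1
        · exact ⟨0, zero_mem _, map_zero _⟩
        · intro y z _ _ hy hz
          simpa using add_mem hy hz
        · intro r y _ hy
          simpa using Submodule.smul_mem _ r hy
      have hsum : ((B, a, d) : Matrix (Fin 2) (Fin 2) (MvPolynomial (Fin s) ℂ)
            × MvPolynomial (Fin s) ℂ × MvPolynomial (Fin s) ℂ)
          = (B, 0, 0) + (0, a, 0) + (0, 0, d) := by simp
      rw [hsum]
      exact add_mem (add_mem (key1 B hB) (key2 a ha)) (key3 d hd)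
  -- construct the linear equivalence S ≃ triple
  let g' : (Matrix (Fin 2) (Fin 2) (MvPolynomial (Fin s) ℂ)
      × MvPolynomial (Fin s) ℂ × MvPolynomial (Fin s) ℂ) →ₗ[MvPolynomial (Fin s) ℂ] ↥S :=
    LinearMap.codRestrict S ofTripleAux (fun x => (hS _).mpr (skew_ofTripleAux x))
  let φ : ↥S ≃ₗ[MvPolynomial (Fin s) ℂ] (Matrix (Fin 2) (Fin 2) (MvPolynomial (Fin s) ℂ)
      × MvPolynomial (Fin s) ℂ × MvPolynomial (Fin s) ℂ) :=
    LinearEquiv.ofLinear (toTripleAux.comp S.subtype) g'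
      (by
        apply LinearMap.ext; intro x
        exact toTripleAux_ofTripleAux x)
      (by
        apply LinearMap.ext; intro N
        apply Subtype.ext
        show ofTripleAux (toTripleAux (N : Matrix (Fin 2 ⊕ Fin 2) (Fin 2 ⊕ Fin 2)
          (MvPolynomial (Fin s) ℂ))) = (N : Matrix (Fin 2 ⊕ Fin 2) (Fin 2 ⊕ Fin 2)
          (MvPolynomial (Fin s) ℂ))
        exact ofTripleAux_toTripleAux _ ((hS N).mp N.2))
  have hφmap : Submodule.map (φ : ↥S →ₗ[MvPolynomial (Fin s) ℂ] _) (TSk.comap S.subtype)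
      = Submodule.prod TSq (Submodule.prod (I : Submodule (MvPolynomial (Fin s) ℂ)
          (MvPolynomial (Fin s) ℂ)) I) := by
    rw [← hmain]
    apply le_antisymm
    · rintro z ⟨⟨N, hNS⟩, hN, rfl⟩
      exact ⟨N, hN, rfl⟩
    · rintro z ⟨N, hN, rfl⟩
      exact ⟨⟨N, hTSkS hN⟩, hN, rfl⟩
  let e1 := Submodule.Quotient.equiv (TSk.comap S.subtype)
    (Submodule.prod TSq (Submodule.prod (I : Submodule (MvPolynomial (Fin s) ℂ)
      (MvPolynomial (Fin s) ℂ)) I)) φ hφmap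
  -- quotient of product
  let q : (Matrix (Fin 2) (Fin 2) (MvPolynomial (Fin s) ℂ)
      × MvPolynomial (Fin s) ℂ × MvPolynomial (Fin s) ℂ) →ₗ[MvPolynomial (Fin s) ℂ]
      ((Matrix (Fin 2) (Fin 2) (MvPolynomial (Fin s) ℂ) ⧸ TSq)
        × (MvPolynomial (Fin s) ℂ ⧸ I) × (MvPolynomial (Fin s) ℂ ⧸ I)) :=
    TSq.mkQ.prodMap ((Submodule.mkQ (I : Submodule (MvPolynomial (Fin s) ℂ)
      (MvPolynomial (Fin s) ℂ))).prodMap (Submodule.mkQ (I : Submodule (MvPolynomial (Fin s) ℂ)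
      (MvPolynomial (Fin s) ℂ))))
  have hqsurj : Function.Surjective q :=
    (Submodule.mkQ_surjective _).prodMap
      ((Submodule.mkQ_surjective _).prodMap (Submodule.mkQ_surjective _))
  have hqker : LinearMap.ker q = Submodule.prod TSq
      (Submodule.prod (I : Submodule (MvPolynomial (Fin s) ℂ) (MvPolynomial (Fin s) ℂ)) I) := by
    rw [LinearMap.ker_prodMap, LinearMap.ker_prodMap, Submodule.ker_mkQ, Submodule.ker_mkQ]
  let e2 := (Submodule.quotEquivOfEq _ _ hqker.symm).trans (q.quotKerEquivOfSurjective hqsurj)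
  let e : (↥S ⧸ TSk.comap S.subtype) ≃ₗ[ℂ]
      ((Matrix (Fin 2) (Fin 2) (MvPolynomial (Fin s) ℂ) ⧸ TSq)
        × (MvPolynomial (Fin s) ℂ ⧸ I) × (MvPolynomial (Fin s) ℂ ⧸ I)) :=
    (e1.trans e2).restrictScalars ℂ
  rw [e.finrank_eq]
  have h2 : FiniteDimensional ℂ ((MvPolynomial (Fin s) ℂ ⧸ I) × (MvPolynomial (Fin s) ℂ ⧸ I)) :=
    inferInstance
  rw [Module.finrank_prod, Module.finrank_prod]
  ring
end
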